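/- arXiv:1310.3659 — 2 statements merged into one kernel-verified Lean document; each statement's English description precedes it below -/
import Mathlib

section
/- Fix χ ∈ C_c^∞(ℝ). There exist constants c₀ > 0 and C such that for all t ≥ 2, all ε with 0 < ε ≤ c₀ t^{-1/2}, and all α with c₀^{-1} t^{-1/2} ≤ α ≤ 1, one has |∫_ε^∞ e^{it(α+σ)²} χ(σ)/σ dσ − χ(0) e^{itα²} F(2εtα)| ≤ C, where F(z) = ∫_z^∞ e^{iτ}/τ dτ. -/
open MeasureTheory Complex Filter Set
open scoped ENNReal
open scoped Topology

noncomputable section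

/-- `F(z) = ∫_z^∞ e^{iτ}/τ dτ`, as an improper (oscillatory) integral. -/
def Fosc (z : ℝ) : ℂ :=
  limUnder Filter.atTop
    (fun R : ℝ => ∫ τ in z..R, Complex.exp (Complex.I * (τ : ℂ)) / (τ : ℂ))

/-- IBP bound for oscillatory integrals with monotone decreasing nonnegative `h = g/φ'`. -/
lemma osc_ibp (a b : ℝ) (hab : a ≤ b) (φ φ' h h' : ℝ → ℝ)
    (hφ : ∀ x ∈ Set.uIcc a b, HasDerivAt φ (φ' x) x)
    (hh : ∀ x ∈ Set.uIcc a b, HasDerivAt h (h' x) x)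
    (hφ'c : ContinuousOn φ' (Set.uIcc a b))
    (hh'c : ContinuousOn h' (Set.uIcc a b))
    (hpos : ∀ x ∈ Set.uIcc a b, 0 ≤ h x)
    (hmono : ∀ x ∈ Set.uIcc a b, h' x ≤ 0) :
    ‖∫ x in a..b, Complex.exp (Complex.I * (φ x : ℂ)) * ((φ' x * h x : ℝ) : ℂ)‖
      ≤ 2 * h a := by
  have hφc : ContinuousOn φ (Set.uIcc a b) := fun x hx => (hφ x hx).continuousAt.continuousWithinAt
  have hhc : ContinuousOn h (Set.uIcc a b) := fun x hx => (hh x hx).continuousAt.continuousWithinAt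
  set e : ℝ → ℂ := fun x => Complex.exp (Complex.I * (φ x : ℂ)) with he
  have hec : ContinuousOn e (Set.uIcc a b) := by
    apply Complex.continuous_exp.comp_continuousOn
    exact continuous_const.continuousOn.mul (Complex.continuous_ofReal.comp_continuousOn hφc)
  have hde : ∀ x ∈ Set.uIcc a b,
      HasDerivAt (fun x => -Complex.I * e x * (h x : ℂ))
        (e x * ((φ' x * h x : ℝ) : ℂ) - Complex.I * e x * ((h' x : ℝ) : ℂ)) x := by
    intro x hx
    have h1 : HasDerivAt (fun x => (Complex.I * (φ x : ℂ))) (Complex.I * (φ' x : ℂ)) x :=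
      ((hφ x hx).ofReal_comp).const_mul Complex.I
    have h2 : HasDerivAt e (Complex.exp (Complex.I * (φ x : ℂ)) * (Complex.I * (φ' x : ℂ))) x :=
      h1.cexp
    have h3 : HasDerivAt (fun x => ((h x : ℝ) : ℂ)) ((h' x : ℝ) : ℂ) x := (hh x hx).ofReal_comp
    have h4 := ((h2.const_mul (-Complex.I)).fun_mul h3)
    refine h4.congr_deriv ?_
    push_cast
    simp only [he]
    ring_nf
    rw [Complex.I_sq]
    ring
  have hint1 : IntervalIntegrable (fun x => e x * ((φ' x * h x : ℝ) : ℂ)) volume a b := by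
    apply ContinuousOn.intervalIntegrable
    exact hec.mul (Complex.continuous_ofReal.comp_continuousOn (hφ'c.mul hhc))
  have hint2 : IntervalIntegrable (fun x => Complex.I * e x * ((h' x : ℝ) : ℂ)) volume a b := by
    apply ContinuousOn.intervalIntegrable
    exact (continuous_const.continuousOn.mul hec).mul
      (Complex.continuous_ofReal.comp_continuousOn hh'c)
  have hftc := intervalIntegral.integral_eq_sub_of_hasDerivAt hde (by
    apply ContinuousOn.intervalIntegrable
    apply ContinuousOn.sub
    · exact hec.mul (Complex.continuous_ofReal.comp_continuousOn (hφ'c.mul hhc))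
    · exact (continuous_const.continuousOn.mul hec).mul
        (Complex.continuous_ofReal.comp_continuousOn hh'c))
  rw [intervalIntegral.integral_sub hint1 hint2] at hftc
  have key : (∫ x in a..b, e x * ((φ' x * h x : ℝ) : ℂ))
      = (-Complex.I * e b * (h b : ℂ) - -Complex.I * e a * (h a : ℂ))
        + ∫ x in a..b, Complex.I * e x * ((h' x : ℝ) : ℂ) := by
    rw [← hftc]; ring
  have hnorme : ∀ x ∈ Set.uIcc a b, ‖e x‖ = 1 := by
    intro x hx
    simp [he, Complex.norm_exp, mul_comm]
  have hbnd2 : ‖∫ x in a..b, Complex.I * e x * ((h' x : ℝ) : ℂ)‖ ≤ h a - h b := by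
    have : ∀ x ∈ Set.uIcc a b, ‖Complex.I * e x * ((h' x : ℝ) : ℂ)‖ = -h' x := by
      intro x hx
      rw [norm_mul, norm_mul, hnorme x hx, Complex.norm_I, Complex.norm_real]
      rw [Real.norm_eq_abs, abs_of_nonpos (hmono x hx)]; ring
    calc ‖∫ x in a..b, Complex.I * e x * ((h' x : ℝ) : ℂ)‖
        ≤ ∫ x in a..b, ‖Complex.I * e x * ((h' x : ℝ) : ℂ)‖ :=
          intervalIntegral.norm_integral_le_integral_norm hab
      _ = ∫ x in a..b, -h' x := by
          apply intervalIntegral.integral_congr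
          intro x hx; exact this x hx
      _ = h a - h b := by
          have := intervalIntegral.integral_eq_sub_of_hasDerivAt
            (f := fun x => -h x) (f' := fun x => -h' x)
            (fun x hx => (hh x hx).neg)
            (ContinuousOn.intervalIntegrable (hh'c.neg))
          rw [this]; ring
  rw [key]
  have h1 : ‖-Complex.I * e b * (h b : ℂ) - -Complex.I * e a * (h a : ℂ)‖ ≤ h b + h a := by
    refine (norm_sub_le _ _).trans ?_
    have e1 : ‖-Complex.I * e b * (h b : ℂ)‖ = h b := by
      rw [norm_mul, norm_mul, norm_neg, Complex.norm_I, hnorme b (Set.right_mem_uIcc),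
        Complex.norm_real, Real.norm_eq_abs, _root_.abs_of_nonneg (hpos b Set.right_mem_uIcc)]
      ring
    have e2 : ‖-Complex.I * e a * (h a : ℂ)‖ = h a := by
      rw [norm_mul, norm_mul, norm_neg, Complex.norm_I, hnorme a (Set.left_mem_uIcc),
        Complex.norm_real, Real.norm_eq_abs, _root_.abs_of_nonneg (hpos a Set.left_mem_uIcc)]
      ring
    rw [e1, e2]
  calc ‖_ + _‖ ≤ (h b + h a) + (h a - h b) := norm_add_le_of_le h1 hbnd2
    _ = 2 * h a := by ring

lemma osc_div_bound (c d a b : ℝ) (ha : 0 < a) (hab : a ≤ b) (hc : 0 < c) (hd : 0 ≤ d) :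
    ‖∫ σ in a..b, Complex.exp (Complex.I * ((c * σ + d * σ ^ 2 : ℝ) : ℂ)) / (σ : ℂ)‖
      ≤ 2 / (a * c) := by
  have huIcc : Set.uIcc a b = Set.Icc a b := Set.uIcc_of_le hab
  have hxpos : ∀ x ∈ Set.uIcc a b, 0 < x := by
    intro x hx; rw [huIcc] at hx; exact lt_of_lt_of_le ha hx.1
  have hupos : ∀ x ∈ Set.uIcc a b, 0 < x * (c + 2 * d * x) := by
    intro x hx
    have hx0 := hxpos x hx
    have : 0 < c + 2 * d * x := by nlinarith
    positivity
  have key := osc_ibp a b hab (fun σ => c * σ + d * σ ^ 2) (fun σ => c + 2 * d * σ)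
      (fun σ => (σ * (c + 2 * d * σ))⁻¹)
      (fun σ => -(c + 4 * d * σ) / (σ * (c + 2 * d * σ)) ^ 2)
      (fun x _ => by
        have : HasDerivAt (fun σ : ℝ => c * σ + d * σ ^ 2) (c * 1 + d * (2 * x)) x := by
          exact ((hasDerivAt_id x).const_mul c).add
            (((hasDerivAt_pow 2 x)).const_mul d |>.congr_deriv (by ring))
        exact this.congr_deriv (by ring))
      (fun x hx => by
        have hu : HasDerivAt (fun σ : ℝ => σ * (c + 2 * d * σ)) (c + 4 * d * x) x := by
          have : HasDerivAt (fun σ : ℝ => σ * (c + 2 * d * σ))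
              (1 * (c + 2 * d * x) + x * (2 * d * 1)) x :=
            (hasDerivAt_id x).mul (((hasDerivAt_id x).const_mul (2*d)).const_add c)
          exact this.congr_deriv (by ring)
        exact hu.inv (ne_of_gt (hupos x hx)))
      (by fun_prop)
      (by
        apply ContinuousOn.div
        · fun_prop
        · fun_prop
        · intro x hx; exact pow_ne_zero _ (ne_of_gt (hupos x hx)))
      (fun x hx => le_of_lt (inv_pos.mpr (hupos x hx)))
      (fun x hx => by
        have h1 : 0 < c + 4 * d * x := by nlinarith [hxpos x hx]
        have h2 : (0:ℝ) < (x * (c + 2 * d * x)) ^ 2 := pow_pos (hupos x hx) 2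
        exact le_of_lt (div_neg_of_neg_of_pos (neg_neg_iff_pos.mpr h1) h2) |>.trans le_rfl)
  have heq : (∫ σ in a..b, Complex.exp (Complex.I * ((c * σ + d * σ ^ 2 : ℝ) : ℂ)) / (σ : ℂ))
      = ∫ x in a..b, Complex.exp (Complex.I * ((c * x + d * x ^ 2 : ℝ) : ℂ))
          * (((c + 2 * d * x) * (x * (c + 2 * d * x))⁻¹ : ℝ) : ℂ) := by
    apply intervalIntegral.integral_congr
    intro x hx
    have hx0 := ne_of_gt (hxpos x hx)
    have hu0 : c + 2 * d * x ≠ 0 := by nlinarith [hxpos x hx]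
    have h5 : (c + 2 * d * x) * (x * (c + 2 * d * x))⁻¹ = x⁻¹ := by
      field_simp
    simp only [h5]
    push_cast
    rw [div_eq_mul_inv]
  rw [heq]
  refine key.trans ?_
  rw [div_eq_mul_inv]
  have : ((fun σ => (σ * (c + 2 * d * σ))⁻¹) a : ℝ) ≤ (a * c)⁻¹ := by
    simp only
    rw [inv_le_inv₀ (hupos a Set.left_mem_uIcc) (by positivity)]
    nlinarith [mul_nonneg (mul_nonneg hd ha.le) ha.le]
  linarith

lemma norm_exp_I_mul_ofReal (x : ℝ) : ‖Complex.exp (Complex.I * (x:ℂ))‖ = 1 := by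
  exact Complex.norm_exp_I_mul_ofReal x

lemma osc_div_bound' (a b : ℝ) (ha : 0 < a) (hab : a ≤ b) :
    ‖∫ τ in a..b, Complex.exp (Complex.I * (τ : ℂ)) / (τ : ℂ)‖ ≤ 2 / a := by
  have := osc_div_bound 1 0 a b ha hab one_pos le_rfl
  simpa using this

lemma hasDeriv_G (τ : ℝ) (hτ : τ ≠ 0) :
    HasDerivAt (fun τ : ℝ => -Complex.I * Complex.exp (Complex.I * (τ : ℂ)) * ((τ : ℂ))⁻¹)
      (Complex.exp (Complex.I * (τ : ℂ)) / (τ : ℂ)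
        + Complex.I * Complex.exp (Complex.I * (τ : ℂ)) / ((τ : ℂ))^2) τ := by
  have h1 : HasDerivAt (fun τ : ℝ => Complex.exp (Complex.I * (τ : ℂ)))
      (Complex.exp (Complex.I * (τ : ℂ)) * Complex.I) τ := by
    have := ((hasDerivAt_id τ).ofReal_comp).const_mul Complex.I
    simpa using this.cexp
  have h2 : HasDerivAt (fun τ : ℝ => ((τ : ℂ))⁻¹) (-(1:ℂ) / ((τ:ℂ))^2) τ := by
    have h3 := (hasDerivAt_inv (show (τ:ℂ) ≠ 0 from Complex.ofReal_ne_zero.mpr hτ)).comp_ofReal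
    simpa [neg_div] using h3
  have h4 := ((h1.const_mul (-Complex.I)).fun_mul h2)
  refine h4.congr_deriv ?_
  have hτ' : (τ:ℂ) ≠ 0 := by exact_mod_cast hτ
  field_simp
  ring_nf
  rw [Complex.I_sq]
  ring

lemma Fosc_spec (z : ℝ) (hz : 0 < z) :
    Tendsto (fun R : ℝ => ∫ τ in z..R, Complex.exp (Complex.I * (τ : ℂ)) / (τ : ℂ)) atTop
      (𝓝 (Fosc z)) := by
  set f : ℝ → ℂ := fun R => ∫ τ in z..R, Complex.exp (Complex.I * (τ : ℂ)) / (τ : ℂ) with hf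
  -- integrability of the τ⁻² piece on Ioi z
  have hmeas : AEStronglyMeasurable
      (fun τ : ℝ => Complex.I * Complex.exp (Complex.I * (τ : ℂ)) / ((τ : ℂ))^2)
      (volume.restrict (Set.Ioi z)) := by
    apply ContinuousOn.aestronglyMeasurable _ measurableSet_Ioi
    apply ContinuousOn.div
    · fun_prop
    · fun_prop
    · intro x hx
      have : (0:ℝ) < x := lt_trans hz hx
      exact pow_ne_zero _ (by exact_mod_cast this.ne')
  have hintsq : IntegrableOn
      (fun τ : ℝ => Complex.I * Complex.exp (Complex.I * (τ : ℂ)) / ((τ : ℂ))^2)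
      (Set.Ioi z) := by
    have hrpow : IntegrableOn (fun τ : ℝ => τ ^ (-2 : ℝ)) (Set.Ioi z) :=
      integrableOn_Ioi_rpow_of_lt (by norm_num) hz
    have hbase : IntegrableOn (fun τ : ℝ => (τ^2)⁻¹) (Set.Ioi z) := by
      apply hrpow.congr_fun _ measurableSet_Ioi
      intro x hx
      have hx0 : (0:ℝ) < x := lt_trans hz hx
      show x ^ (-2:ℝ) = (x^2)⁻¹
      rw [Real.rpow_neg hx0.le, ← Real.rpow_natCast x 2]
      norm_num
    refine Integrable.mono' hbase hmeas ?_
    rw [ae_restrict_iff' measurableSet_Ioi]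
    filter_upwards with x
    intro hx
    have hx0 : (0:ℝ) < x := lt_trans hz hx
    rw [norm_div, norm_mul, Complex.norm_I, one_mul, _root_.norm_exp_I_mul_ofReal, one_div,
      ← Complex.ofReal_pow, Complex.norm_real, Real.norm_eq_abs, abs_of_pos (by positivity : (0:ℝ) < x^2)]
  -- FTC identity
  have hftc : ∀ R : ℝ, z ≤ R → f R
      = (-Complex.I * Complex.exp (Complex.I * (R : ℂ)) * ((R : ℂ))⁻¹
          + Complex.I * Complex.exp (Complex.I * (z : ℂ)) * ((z : ℂ))⁻¹)
        - ∫ τ in z..R, Complex.I * Complex.exp (Complex.I * (τ : ℂ)) / ((τ : ℂ))^2 := by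
    intro R hR
    have hpos : ∀ x ∈ Set.uIcc z R, (0:ℝ) < x := by
      intro x hx
      rw [Set.uIcc_of_le hR] at hx
      exact lt_of_lt_of_le hz hx.1
    have hcont1 : ContinuousOn (fun τ : ℝ => Complex.exp (Complex.I * (τ : ℂ)) / (τ : ℂ))
        (Set.uIcc z R) := by
      apply ContinuousOn.div
      · fun_prop
      · fun_prop
      · intro x hx; exact_mod_cast (hpos x hx).ne'
    have hcont2 : ContinuousOn
        (fun τ : ℝ => Complex.I * Complex.exp (Complex.I * (τ : ℂ)) / ((τ : ℂ))^2)
        (Set.uIcc z R) := by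
      apply ContinuousOn.div
      · fun_prop
      · fun_prop
      · intro x hx; exact pow_ne_zero _ (by exact_mod_cast (hpos x hx).ne')
    have hint1 : IntervalIntegrable
        (fun τ : ℝ => Complex.exp (Complex.I * (τ : ℂ)) / (τ : ℂ)) volume z R :=
      hcont1.intervalIntegrable
    have hint2 : IntervalIntegrable
        (fun τ : ℝ => Complex.I * Complex.exp (Complex.I * (τ : ℂ)) / ((τ : ℂ))^2) volume z R :=
      hcont2.intervalIntegrable
    have key := intervalIntegral.integral_eq_sub_of_hasDerivAt
      (f := fun τ : ℝ => -Complex.I * Complex.exp (Complex.I * (τ : ℂ)) * ((τ : ℂ))⁻¹)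
      (f' := fun τ : ℝ => Complex.exp (Complex.I * (τ : ℂ)) / (τ : ℂ)
        + Complex.I * Complex.exp (Complex.I * (τ : ℂ)) / ((τ : ℂ))^2)
      (fun x hx => hasDeriv_G x (hpos x hx).ne') (hint1.add hint2)
    rw [intervalIntegral.integral_add hint1 hint2] at key
    have : f R = (∫ τ in z..R, Complex.exp (Complex.I * (τ : ℂ)) / (τ : ℂ)) := rfl
    rw [this]
    have := key
    linear_combination this
  -- limit
  set ℓ : ℂ := Complex.I * Complex.exp (Complex.I * (z : ℂ)) * ((z : ℂ))⁻¹
      - ∫ τ in Set.Ioi z, Complex.I * Complex.exp (Complex.I * (τ : ℂ)) / ((τ : ℂ))^2 with hℓ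
  have hlim : Tendsto f atTop (𝓝 ℓ) := by
    have t1 : Tendsto (fun R : ℝ => -Complex.I * Complex.exp (Complex.I * (R : ℂ)) * ((R : ℂ))⁻¹)
        atTop (𝓝 0) := by
      apply squeeze_zero_norm' (a := fun R : ℝ => R⁻¹) _ tendsto_inv_atTop_zero
      filter_upwards [eventually_gt_atTop 0] with R hR
      rw [norm_mul, norm_mul, norm_neg, Complex.norm_I, one_mul, _root_.norm_exp_I_mul_ofReal, one_mul,
        norm_inv, Complex.norm_real, Real.norm_eq_abs, abs_of_pos hR]
    have t2 : Tendsto (fun R : ℝ =>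
        ∫ τ in z..R, Complex.I * Complex.exp (Complex.I * (τ : ℂ)) / ((τ : ℂ))^2) atTop
        (𝓝 (∫ τ in Set.Ioi z, Complex.I * Complex.exp (Complex.I * (τ : ℂ)) / ((τ : ℂ))^2)) :=
      intervalIntegral_tendsto_integral_Ioi z hintsq tendsto_id
    have comb := ((t1.add (tendsto_const_nhds
      (x := Complex.I * Complex.exp (Complex.I * (z : ℂ)) * ((z : ℂ))⁻¹))).sub t2)
    rw [zero_add] at comb
    apply comb.congr'
    filter_upwards [eventually_ge_atTop z] with R hR
    exact (hftc R hR).symm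
  have : Fosc z = ℓ := hlim.limUnder_eq
  rw [this]; exact hlim

lemma Fosc_tail (z W : ℝ) (hz : 0 < z) (hzW : z ≤ W) :
    ‖Fosc z - ∫ τ in z..W, Complex.exp (Complex.I * (τ : ℂ)) / (τ : ℂ)‖ ≤ 2 / W := by
  have hW : 0 < W := lt_of_lt_of_le hz hzW
  have hlim := (Fosc_spec z hz).sub_const
    (∫ τ in z..W, Complex.exp (Complex.I * (τ : ℂ)) / (τ : ℂ))
  apply le_of_tendsto hlim.norm
  filter_upwards [eventually_ge_atTop W] with R hR
  have hcont : ∀ p q : ℝ, 0 < p → p ≤ q → IntervalIntegrable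
      (fun τ : ℝ => Complex.exp (Complex.I * (τ : ℂ)) / (τ : ℂ)) volume p q := by
    intro p q hp hpq
    apply ContinuousOn.intervalIntegrable
    apply ContinuousOn.div
    · fun_prop
    · fun_prop
    · intro x hx
      rw [Set.uIcc_of_le hpq] at hx
      exact_mod_cast (lt_of_lt_of_le hp hx.1).ne'
  have hsplit := intervalIntegral.integral_add_adjacent_intervals
    (hcont z W hz hzW) (hcont W R hW hR)
  have : (∫ τ in z..R, Complex.exp (Complex.I * (τ : ℂ)) / (τ : ℂ))
      - (∫ τ in z..W, Complex.exp (Complex.I * (τ : ℂ)) / (τ : ℂ))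
      = ∫ τ in W..R, Complex.exp (Complex.I * (τ : ℂ)) / (τ : ℂ) := by
    rw [← hsplit]; ring
  rw [this]
  exact osc_div_bound' W R hW hR

lemma exp_I_lip (a b : ℝ) :
    ‖Complex.exp (Complex.I * (a:ℂ)) - Complex.exp (Complex.I * (b:ℂ))‖ ≤ |a - b| := by
  have hd : ∀ x : ℝ, x ∈ Set.univ → HasDerivWithinAt
      (fun x : ℝ => Complex.exp (Complex.I * (x:ℂ)))
      (Complex.I * Complex.exp (Complex.I * (x:ℂ))) Set.univ x := by
    intro x _
    have h2 : HasDerivAt (fun x : ℝ => Complex.exp (Complex.I * (x:ℂ)))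
        (Complex.I * Complex.exp (Complex.I * (x:ℂ))) x := by
      have := (((hasDerivAt_id x).ofReal_comp).const_mul Complex.I).cexp
      simpa [mul_comm] using this
    exact h2.hasDerivWithinAt
  have hb : ∀ x : ℝ, x ∈ Set.univ →
      ‖Complex.I * Complex.exp (Complex.I * (x:ℂ))‖ ≤ 1 := by
    intro x _
    rw [norm_mul, Complex.norm_I, one_mul, _root_.norm_exp_I_mul_ofReal]
  have := Convex.norm_image_sub_le_of_norm_hasDerivWithin_le hd hb convex_univ
    (Set.mem_univ b) (Set.mem_univ a)
  simpa [Real.norm_eq_abs] using this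

set_option maxHeartbeats 2000000 in
/-- **Model oscillatory integral, stationary regime `α ≳ t^{-1/2}`.**
For `χ ∈ C_c^∞(ℝ)` there are `c₀ > 0` and `C` such that for all `t ≥ 2`,
`0 < ε ≤ c₀ t^{-1/2}` and `c₀⁻¹ t^{-1/2} ≤ α ≤ 1`,
`∫_ε^∞ e^{it(α+σ)²} χ(σ)/σ dσ = χ(0) e^{itα²} F(2εtα) + O(1)`. -/
theorem model_case_large_alpha
    (χ : ℝ → ℂ) (hχ : ContDiff ℝ (⊤ : ℕ∞) χ) (hχc : HasCompactSupport χ) :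
    ∃ c₀ > (0:ℝ), ∃ C : ℝ, ∀ t : ℝ, 2 ≤ t →
      ∀ ε : ℝ, 0 < ε → ε ≤ c₀ * t ^ (-(1:ℝ)/2) →
      ∀ α : ℝ, c₀⁻¹ * t ^ (-(1:ℝ)/2) ≤ α → α ≤ 1 →
        ‖(∫ σ in Set.Ioi ε,
            Complex.exp (Complex.I * ((t * (α + σ) ^ 2 : ℝ) : ℂ)) * χ σ / (σ : ℂ)) -
          χ 0 * Complex.exp (Complex.I * ((t * α ^ 2 : ℝ) : ℂ)) *
            Fosc (2 * ε * t * α)‖ ≤ C := by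
  -- Lipschitz constant for χ
  obtain ⟨L0, hL0⟩ := (hχc.deriv).exists_bound_of_continuous (hχ.continuous_deriv (by simp))
  set L : ℝ := max L0 0 with hLdef
  have hL : 0 ≤ L := le_max_right _ _
  have hLip : ∀ x y : ℝ, ‖χ x - χ y‖ ≤ L * |x - y| := by
    intro x y
    have hd : ∀ z : ℝ, z ∈ Set.univ → HasDerivWithinAt χ (deriv χ z) Set.univ z := fun z _ =>
      ((hχ.differentiable (by simp)).differentiableAt.hasDerivAt).hasDerivWithinAt
    have hb : ∀ z : ℝ, z ∈ Set.univ → ‖deriv χ z‖ ≤ L := fun z _ =>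
      (hL0 z).trans (le_max_left _ _)
    have := Convex.norm_image_sub_le_of_norm_hasDerivWithin_le hd hb convex_univ
      (Set.mem_univ y) (Set.mem_univ x)
    simpa [Real.norm_eq_abs] using this
  -- support bound
  obtain ⟨r, hr⟩ := hχc.isBounded.subset_closedBall 0
  set K : ℝ := max r 1 + 1 with hKdef
  have hK1 : 1 ≤ K := by
    have : (1:ℝ) ≤ max r 1 := le_max_right _ _
    linarith
  have hKsupp : ∀ x : ℝ, K ≤ x → χ x = 0 := by
    intro x hx
    apply image_eq_zero_of_notMem_tsupport
    intro hmem
    have := hr hmem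
    rw [Metric.mem_closedBall, Real.dist_eq, sub_zero] at this
    have h1 : r ≤ max r 1 := le_max_left _ _
    have h2 : |x| ≥ x := le_abs_self x
    linarith [abs_le.mp this]
  refine ⟨1, one_pos, L * K + 4 * ‖χ 0‖, ?_⟩
  intro t ht ε hε0 hεs α hαs hα1
  rw [one_mul] at hεs
  rw [inv_one, one_mul] at hαs
  set s : ℝ := t ^ (-(1:ℝ)/2) with hsdef
  have ht0 : (0:ℝ) < t := by linarith
  have hs0 : 0 < s := Real.rpow_pos_of_pos ht0 _
  have hss : t * (s * s) = 1 := by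
    rw [hsdef, ← Real.rpow_add ht0]
    norm_num
    rw [Real.rpow_neg_one]
    field_simp
  have hs1 : s ≤ 1 := Real.rpow_le_one_of_one_le_of_nonpos (by linarith) (by norm_num)
  have hα0 : 0 < α := lt_of_lt_of_le hs0 hαs
  have htαs : 1 ≤ t * α * s := by nlinarith
  have htα : 1 ≤ t * α := by nlinarith
  have hεK : ε ≤ K := by linarith [hεs.trans hs1]
  have hsK : s ≤ K := hs1.trans hK1
  have hεs' : ε ≤ s := hεs
  -- continuity helpers
  have hconOn : ∀ (g : ℝ → ℝ), Continuous g → ∀ (A : ℝ → ℂ), Continuous A → ∀ p q : ℝ,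
      0 < p → p ≤ q →
      ContinuousOn (fun σ : ℝ => Complex.exp (Complex.I * ((g σ : ℝ) : ℂ)) * A σ / (σ : ℂ))
        (Set.Icc p q) := by
    intro g hg A hA p q hp hpq
    apply ContinuousOn.div
    · fun_prop
    · fun_prop
    · intro x hx
      exact_mod_cast (lt_of_lt_of_le hp hx.1).ne'
  have hii : ∀ (g : ℝ → ℝ), Continuous g → ∀ (A : ℝ → ℂ), Continuous A → ∀ p q : ℝ,
      0 < p → p ≤ q →
      IntervalIntegrable
        (fun σ : ℝ => Complex.exp (Complex.I * ((g σ : ℝ) : ℂ)) * A σ / (σ : ℂ)) volume p q := by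
    intro g hg A hA p q hp hpq
    apply ContinuousOn.intervalIntegrable
    rw [Set.uIcc_of_le hpq]
    exact hconOn g hg A hA p q hp hpq
  have hii0 : ∀ (g : ℝ → ℝ), Continuous g → ∀ p q : ℝ, 0 < p → p ≤ q →
      IntervalIntegrable
        (fun σ : ℝ => Complex.exp (Complex.I * ((g σ : ℝ) : ℂ)) / (σ : ℂ)) volume p q := by
    intro g hg p q hp hpq
    have := hii g hg (fun _ => 1) continuous_const p q hp hpq
    simpa using this
  -- the integrand
  set f : ℝ → ℂ := fun σ =>
    Complex.exp (Complex.I * ((t * (α + σ) ^ 2 : ℝ) : ℂ)) * χ σ / (σ : ℂ) with hfdef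
  set e : ℝ → ℂ := fun σ => Complex.exp (Complex.I * ((t * (α + σ) ^ 2 : ℝ) : ℂ)) with hedef
  have hgcont : Continuous (fun σ : ℝ => t * (α + σ) ^ 2) := by fun_prop
  -- Step 1 : reduce to an interval integral
  have step1 : ∫ σ in Set.Ioi ε, f σ = ∫ σ in ε..K, f σ := by
    have hfIoiK : Set.EqOn f 0 (Set.Ioi K) := by
      intro x hx
      simp [hfdef, hKsupp x (le_of_lt hx)]
    have hf1 : IntegrableOn f (Set.Ioc ε K) := by
      exact ((hconOn _ hgcont χ hχ.continuous ε K hε0 hεK).integrableOn_Icc).mono_set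
        Set.Ioc_subset_Icc_self
    have hf2 : IntegrableOn f (Set.Ioi K) := by
      rw [integrableOn_congr_fun hfIoiK measurableSet_Ioi]
      exact integrableOn_zero
    rw [← Set.Ioc_union_Ioi_eq_Ioi hεK,
      setIntegral_union (Set.Ioc_disjoint_Ioi le_rfl) measurableSet_Ioi hf1 hf2,
      setIntegral_congr_fun measurableSet_Ioi hfIoiK]
    simp [intervalIntegral.integral_of_le hεK]
  -- Step 2 : split off χ(0)
  set B : ℂ := ∫ σ in ε..K, e σ * (χ σ - χ 0) / (σ : ℂ) with hBdef
  set G : ℂ := ∫ σ in ε..K, e σ / (σ : ℂ) with hGdef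
  have step2 : ∫ σ in ε..K, f σ = χ 0 * G + B := by
    rw [hGdef, hBdef, ← intervalIntegral.integral_const_mul,
      ← intervalIntegral.integral_add
        ((hii0 _ hgcont ε K hε0 hεK).const_mul (χ 0))
        (hii _ hgcont (fun σ => χ σ - χ 0) (hχ.continuous.sub continuous_const) ε K hε0 hεK)]
    apply intervalIntegral.integral_congr
    intro σ hσ
    rw [Set.uIcc_of_le hεK] at hσ
    have hσ0 : (σ:ℂ) ≠ 0 := by exact_mod_cast (lt_of_lt_of_le hε0 hσ.1).ne'
    simp only [hfdef, hedef]
    field_simp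
    ring
  -- Step 3 : bound B
  have hBbound : ‖B‖ ≤ L * K := by
    have : ‖B‖ ≤ L * |K - ε| := by
      apply intervalIntegral.norm_integral_le_of_norm_le_const
      intro σ hσ
      rw [Set.uIoc_of_le hεK] at hσ
      have hσ0 : 0 < σ := lt_of_lt_of_le hε0 hσ.1.le
      rw [norm_div, norm_mul, hedef]
      simp only
      rw [_root_.norm_exp_I_mul_ofReal, one_mul, Complex.norm_real, Real.norm_eq_abs,
        abs_of_pos hσ0]
      rw [div_le_iff₀ hσ0]
      have := hLip σ 0
      rw [sub_zero, abs_of_pos hσ0] at this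
      exact this
    refine this.trans ?_
    have : |K - ε| ≤ K := by rw [_root_.abs_of_nonneg (by linarith : (0:ℝ) ≤ K - ε)]; linarith
    nlinarith
  -- Step 4 : pull out the phase e^{i t α²}
  set J : ℂ := ∫ σ in ε..K, Complex.exp (Complex.I * ((2*t*α*σ + t*σ^2 : ℝ) : ℂ)) / (σ : ℂ)
    with hJdef
  have step4 : G = Complex.exp (Complex.I * ((t * α ^ 2 : ℝ) : ℂ)) * J := by
    rw [hGdef, hJdef, ← intervalIntegral.integral_const_mul]
    apply intervalIntegral.integral_congr
    intro σ hσ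
    simp only [hedef]
    rw [← mul_div_assoc, ← Complex.exp_add]
    congr 2
    push_cast
    ring
  -- Step 5 : pieces
  set P1 : ℂ := ∫ σ in ε..s, Complex.exp (Complex.I * ((2*t*α*σ + t*σ^2 : ℝ) : ℂ)) / (σ : ℂ)
  set P2 : ℂ := ∫ σ in s..K, Complex.exp (Complex.I * ((2*t*α*σ + t*σ^2 : ℝ) : ℂ)) / (σ : ℂ)
  set Q1 : ℂ := ∫ σ in ε..s, Complex.exp (Complex.I * ((2*t*α*σ : ℝ) : ℂ)) / (σ : ℂ)
  set Q2 : ℂ := ∫ σ in s..K, Complex.exp (Complex.I * ((2*t*α*σ : ℝ) : ℂ)) / (σ : ℂ)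
  set QQ : ℂ := ∫ σ in ε..K, Complex.exp (Complex.I * ((2*t*α*σ : ℝ) : ℂ)) / (σ : ℂ)
  have hJsplit : P1 + P2 = J :=
    intervalIntegral.integral_add_adjacent_intervals
      (hii0 _ (by fun_prop) ε s hε0 hεs') (hii0 _ (by fun_prop) s K hs0 hsK)
  have hQsplit : Q1 + Q2 = QQ :=
    intervalIntegral.integral_add_adjacent_intervals
      (hii0 _ (by fun_prop) ε s hε0 hεs') (hii0 _ (by fun_prop) s K hs0 hsK)
  -- Step 6 : near-zero comparison
  have hP1Q1 : ‖P1 - Q1‖ ≤ 1 := by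
    have heq : P1 - Q1 = ∫ σ in ε..s,
        (Complex.exp (Complex.I * ((2*t*α*σ + t*σ^2 : ℝ) : ℂ))
          - Complex.exp (Complex.I * ((2*t*α*σ : ℝ) : ℂ))) / (σ : ℂ) := by
      rw [← intervalIntegral.integral_sub
        (hii0 _ (by fun_prop) ε s hε0 hεs') (hii0 _ (by fun_prop) ε s hε0 hεs')]
      apply intervalIntegral.integral_congr
      intro σ _
      simp [sub_div]
    have hb : ‖P1 - Q1‖ ≤ (t*s) * |s - ε| := by
      rw [heq]
      apply intervalIntegral.norm_integral_le_of_norm_le_const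
      intro σ hσ
      rw [Set.uIoc_of_le hεs'] at hσ
      have hσ0 : 0 < σ := lt_of_lt_of_le hε0 hσ.1.le
      rw [norm_div, Complex.norm_real, Real.norm_eq_abs, abs_of_pos hσ0, div_le_iff₀ hσ0]
      have := exp_I_lip (2*t*α*σ + t*σ^2) (2*t*α*σ)
      have h2 : |2*t*α*σ + t*σ^2 - 2*t*α*σ| = t*σ^2 := by
        rw [show 2*t*α*σ + t*σ^2 - (2*t*α*σ) = t*σ^2 by ring, _root_.abs_of_nonneg (by positivity : (0:ℝ) ≤ t*σ^2)]
      rw [h2] at this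
      refine this.trans ?_
      nlinarith [mul_nonneg (mul_nonneg ht0.le hσ0.le) (sub_nonneg.mpr hσ.2)]
    refine hb.trans ?_
    have h3 : |s - ε| ≤ s := by rw [_root_.abs_of_nonneg (by linarith : (0:ℝ) ≤ s - ε)]; linarith
    nlinarith
  -- Step 7 : oscillatory bounds on [s, K]
  have hP2 : ‖P2‖ ≤ 1 := by
    have := osc_div_bound (2*t*α) t s K hs0 hsK (by positivity) ht0.le
    refine this.trans ?_
    rw [div_le_one (by positivity)]
    nlinarith
  have hQ2 : ‖Q2‖ ≤ 1 := by
    have h0 := osc_div_bound (2*t*α) 0 s K hs0 hsK (by positivity) le_rfl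
    have heq : (∫ σ in s..K,
        Complex.exp (Complex.I * ((2*t*α*σ + 0*σ^2 : ℝ) : ℂ)) / (σ : ℂ)) = Q2 := by
      apply intervalIntegral.integral_congr
      intro σ _
      norm_num
    rw [heq] at h0
    refine h0.trans ?_
    rw [div_le_one (by positivity)]
    nlinarith
  -- Step 8 : substitution and the tail of Fosc
  have hsub : QQ = ∫ τ in (2*t*α*ε)..(2*t*α*K),
      Complex.exp (Complex.I * (τ : ℂ)) / (τ : ℂ) := by
    have hc0 : (2*t*α) ≠ 0 := by positivity
    have h1 := intervalIntegral.integral_comp_mul_left (a := ε) (b := K)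
      (fun τ : ℝ => Complex.exp (Complex.I * (τ : ℂ)) / (τ : ℂ)) hc0
    have h2 : QQ = (2*t*α) • ∫ σ in ε..K,
        Complex.exp (Complex.I * ((2*t*α*σ : ℝ) : ℂ)) / ((2*t*α*σ : ℝ) : ℂ) := by
      rw [← intervalIntegral.integral_smul]
      apply intervalIntegral.integral_congr
      intro σ hσ
      rw [Set.uIcc_of_le hεK] at hσ
      have hσ0 : (σ:ℂ) ≠ 0 := by
        exact_mod_cast (lt_of_lt_of_le hε0 hσ.1).ne'
      have hcC : ((2*t*α : ℝ):ℂ) ≠ 0 := by exact_mod_cast hc0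
      simp only [Complex.real_smul]
      push_cast at hcC ⊢
      rw [mul_div_assoc', mul_div_mul_left _ _ hcC]
    rw [h2, h1, smul_smul, mul_inv_cancel₀ hc0, one_smul]
  have htail : ‖Fosc (2 * ε * t * α) - QQ‖ ≤ 1 := by
    have hz0 : 0 < 2*t*α*ε := by positivity
    have hzW : 2*t*α*ε ≤ 2*t*α*K := by nlinarith
    have := Fosc_tail (2*t*α*ε) (2*t*α*K) hz0 hzW
    rw [← hsub] at this
    have harg : 2 * ε * t * α = 2*t*α*ε := by ring
    rw [harg]
    refine this.trans ?_
    rw [div_le_one (by positivity)]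
    nlinarith
  -- Step 9 : combine
  have hJF : ‖J - Fosc (2 * ε * t * α)‖ ≤ 4 := by
    have hkey : J - Fosc (2 * ε * t * α)
        = (P1 - Q1) + P2 - Q2 - (Fosc (2 * ε * t * α) - QQ) := by
      rw [← hJsplit, ← hQsplit]; ring
    rw [hkey]
    calc ‖(P1 - Q1) + P2 - Q2 - (Fosc (2 * ε * t * α) - QQ)‖
        ≤ ‖(P1 - Q1) + P2 - Q2‖ + ‖Fosc (2 * ε * t * α) - QQ‖ := norm_sub_le _ _
      _ ≤ (‖(P1 - Q1) + P2‖ + ‖Q2‖) + ‖Fosc (2 * ε * t * α) - QQ‖ := by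
          gcongr; exact norm_sub_le _ _
      _ ≤ ((‖P1 - Q1‖ + ‖P2‖) + ‖Q2‖) + ‖Fosc (2 * ε * t * α) - QQ‖ := by
          gcongr; exact norm_add_le _ _
      _ ≤ ((1 + 1) + 1) + 1 := by gcongr
      _ = 4 := by norm_num
  rw [step1, step2, step4]
  have hfinal : χ 0 * (Complex.exp (Complex.I * ((t * α ^ 2 : ℝ) : ℂ)) * J) + B
      - χ 0 * Complex.exp (Complex.I * ((t * α ^ 2 : ℝ) : ℂ)) * Fosc (2 * ε * t * α)
      = B + χ 0 * Complex.exp (Complex.I * ((t * α ^ 2 : ℝ) : ℂ))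
          * (J - Fosc (2 * ε * t * α)) := by ring
  rw [hfinal]
  calc ‖B + χ 0 * Complex.exp (Complex.I * ((t * α ^ 2 : ℝ) : ℂ))
          * (J - Fosc (2 * ε * t * α))‖
      ≤ ‖B‖ + ‖χ 0 * Complex.exp (Complex.I * ((t * α ^ 2 : ℝ) : ℂ))
          * (J - Fosc (2 * ε * t * α))‖ := norm_add_le _ _
    _ = ‖B‖ + ‖χ 0‖ * ‖J - Fosc (2 * ε * t * α)‖ := by
        rw [norm_mul, norm_mul, _root_.norm_exp_I_mul_ofReal, mul_one]
    _ ≤ L * K + ‖χ 0‖ * 4 := by gcongr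
    _ = L * K + 4 * ‖χ 0‖ := by ring
end
end

section
/- Let g, σ > 0, let τ̄(λ) = √(gλ + σλ³) for λ > 0, and let λ₀ = √((2√3 − 3)g/(3σ)) be the inflection point of τ̄. If 0 < α ≤ λ₀ ≤ λ and τ̄'(α) = τ̄'(λ), then τ̄(λ + α) < τ̄(λ) + τ̄(α). Consequently the -- interaction for gravity–capillary water waves has no space-time resonances of the form ξ = (λ + α(λ))e₀ with α(λ) ≠ λ. -/
open Real Set

noncomputable section

/-!
Write `f(x) = g x + σ x³`, so that `τ̄ = √f` and `f(l + a) = f(l) + f(a) + 3σ l a (l + a)`.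
Squaring twice, `τ̄(l + a) < τ̄(l) + τ̄(a)` becomes the polynomial inequality
`9σ² l a (l + a)² < 4 (g + σl²)(g + σa²)`. Squaring `τ̄'(a) = τ̄'(l)` gives a polynomial
equation which, after removing the trivial factor `l - a`, leaves a cubic relation between `g`,
`σal` and `σ(a² + l²)`; substituting it turns the polynomial inequality into a sum of positive
terms. In the remaining case `a = l` the hypotheses force `a = λ₀`, and there the inequality reads
`2σλ₀² < g`.
-/

lemma sqrt_lt_sqrt_add_sqrt_of_sq_lt {a b c : ℝ} (ha : 0 ≤ a) (hb : 0 ≤ b)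
    (h : c ^ 2 < 4 * a * b) : √(a + b + c) < √a + √b := by
  have hab : 0 < a * b := by nlinarith [sq_nonneg c]
  have hsum : 0 < √a + √b := by
    have : 0 < √a := Real.sqrt_pos.mpr (pos_of_mul_pos_left hab hb)
    positivity
  have hc : c < 2 * (√a * √b) := by
    rw [← Real.sqrt_mul ha, show (2 : ℝ) = √(2 ^ 2) by simp, ← Real.sqrt_mul (by norm_num)]
    exact Real.lt_sqrt_of_sq_lt (by linarith)
  rw [Real.sqrt_lt' hsum, add_sq, Real.sq_sqrt ha, Real.sq_sqrt hb]
  linarith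

section GravityCapillary

variable {g σ : ℝ}

lemma hasDerivAt_sqrt_cubic {x : ℝ} (hx : g * x + σ * x ^ 3 ≠ 0) :
    HasDerivAt (fun y : ℝ => √(g * y + σ * y ^ 3))
      ((g + 3 * σ * x ^ 2) / (2 * √(g * x + σ * x ^ 3))) x := by
  have hcubic : HasDerivAt (fun y : ℝ => g * y + σ * y ^ 3) (g + 3 * σ * x ^ 2) x := by
    refine (((hasDerivAt_id x).const_mul g).add
      ((hasDerivAt_pow 3 x).const_mul σ)).congr_deriv ?_
    norm_num
    ring
  exact hcubic.sqrt hx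

lemma sq_mul_eq_of_deriv_sqrt_cubic_eq (hg : 0 < g) (hσ : 0 < σ) {a l : ℝ} (ha : 0 < a)
    (hl : 0 < l)
    (h : deriv (fun y : ℝ => √(g * y + σ * y ^ 3)) a
      = deriv (fun y : ℝ => √(g * y + σ * y ^ 3)) l) :
    (g + 3 * σ * a ^ 2) ^ 2 * (g * l + σ * l ^ 3)
      = (g + 3 * σ * l ^ 2) ^ 2 * (g * a + σ * a ^ 3) := by
  have hfa : 0 < g * a + σ * a ^ 3 := by positivity
  have hfl : 0 < g * l + σ * l ^ 3 := by positivity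
  rw [(hasDerivAt_sqrt_cubic hfa.ne').deriv, (hasDerivAt_sqrt_cubic hfl.ne').deriv,
    div_eq_div_iff (by positivity) (by positivity)] at h
  have h2 := congrArg (· ^ 2) h
  simp only [mul_pow, Real.sq_sqrt hfa.le, Real.sq_sqrt hfl.le] at h2
  linarith

/-- The cofactor of `l - a` in `(g + 3σa²)² f(l) - (g + 3σl²)² f(a)`, where `f(x) = g x + σ x³`;
its zeros off the diagonal are the conjugate pairs `τ̄'(a) = τ̄'(l)`. -/
def conjugatePointPoly (g σ a l : ℝ) : ℝ :=
  g ^ 3 + g ^ 2 * σ * (a ^ 2 + l ^ 2) - 5 * g ^ 2 * σ * a * l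
    - 9 * g * σ ^ 2 * a * l * (a ^ 2 + l ^ 2) - 3 * g * σ ^ 2 * a ^ 2 * l ^ 2
    - 9 * σ ^ 3 * a ^ 3 * l ^ 3

lemma conjugatePointPoly_eq_zero {a l : ℝ} (hne : l ≠ a)
    (h : (g + 3 * σ * a ^ 2) ^ 2 * (g * l + σ * l ^ 3)
      = (g + 3 * σ * l ^ 2) ^ 2 * (g * a + σ * a ^ 3)) :
    conjugatePointPoly g σ a l = 0 := by
  have hfactor : (l - a) * conjugatePointPoly g σ a l = 0 := by
    unfold conjugatePointPoly
    linear_combination h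
  exact (mul_eq_zero.mp hfactor).resolve_left (sub_ne_zero.mpr hne)

lemma resonance_ineq_of_conjugatePointPoly_eq_zero (hg : 0 < g) (hσ : 0 < σ) {a l : ℝ}
    (ha : 0 < a) (hl : 0 < l) (hQ : conjugatePointPoly g σ a l = 0) :
    9 * σ ^ 2 * l * a * (l + a) ^ 2 < 4 * (g + σ * l ^ 2) * (g + σ * a ^ 2) := by
  set P := σ * a * l
  have hP : 0 < P := by positivity
  -- Eliminating `g² σ (a² + l²)` with `hQ` leaves only positive terms.
  have hsum : g * (4 * (g + σ * l ^ 2) * (g + σ * a ^ 2) - 9 * σ ^ 2 * l * a * (l + a) ^ 2)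
      = 4 * conjugatePointPoly g σ a l + 20 * g ^ 2 * P + 27 * g * P * (σ * (l - a) ^ 2)
        + 52 * g * P ^ 2 + 36 * P ^ 3 := by
    unfold conjugatePointPoly
    ring
  have hpos :
      0 < g * (4 * (g + σ * l ^ 2) * (g + σ * a ^ 2) - 9 * σ ^ 2 * l * a * (l + a) ^ 2) := by
    rw [hsum, hQ]
    positivity
  linarith [pos_of_mul_pos_right hpos hg.le]

lemma resonance_ineq_diag (hσ : 0 < σ) {a : ℝ} (ha : 0 < a) (h : 2 * σ * a ^ 2 < g) :
    9 * σ ^ 2 * a * a * (a + a) ^ 2 < 4 * (g + σ * a ^ 2) * (g + σ * a ^ 2) := by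
  have hs : 0 < σ * a ^ 2 := by positivity
  nlinarith

lemma two_mul_sigma_mul_inflection_sq_lt (hg : 0 < g) (hσ : 0 < σ) :
    2 * σ * √((2 * √3 - 3) * g / (3 * σ)) ^ 2 < g := by
  have hs3 : √3 ^ 2 = 3 := Real.sq_sqrt (by norm_num)
  have hs3_gt : 3 / 2 < √3 := by nlinarith [Real.sqrt_nonneg 3]
  have hs3_lt : √3 < 9 / 4 := by nlinarith [Real.sqrt_nonneg 3]
  rw [Real.sq_sqrt (by apply div_nonneg <;> nlinarith)]
  field_simp
  nlinarith

lemma sqrt_cubic_add_lt (hg : 0 ≤ g) (hσ : 0 ≤ σ) {a l : ℝ} (ha : 0 < a) (hl : 0 < l)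
    (h : 9 * σ ^ 2 * l * a * (l + a) ^ 2 < 4 * (g + σ * l ^ 2) * (g + σ * a ^ 2)) :
    √(g * (l + a) + σ * (l + a) ^ 3) < √(g * l + σ * l ^ 3) + √(g * a + σ * a ^ 3) := by
  have hsplit : g * (l + a) + σ * (l + a) ^ 3
      = (g * l + σ * l ^ 3) + (g * a + σ * a ^ 3) + 3 * σ * l * a * (l + a) := by ring
  rw [hsplit]
  apply sqrt_lt_sqrt_add_sqrt_of_sq_lt (by positivity) (by positivity)
  calc (3 * σ * l * a * (l + a)) ^ 2 = l * a * (9 * σ ^ 2 * l * a * (l + a) ^ 2) := by ring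
    _ < l * a * (4 * (g + σ * l ^ 2) * (g + σ * a ^ 2)) :=
        mul_lt_mul_of_pos_left h (mul_pos hl ha)
    _ = 4 * (g * l + σ * l ^ 3) * (g * a + σ * a ^ 3) := by ring

end GravityCapillary

/-- **No resonance in the second subcase of the `--` interaction.** If `0 < α ≤ λ₀ ≤ λ`
and `τ̄'(α) = τ̄'(λ)` (so that `α = α(λ)` is the conjugate point), then
`τ̄(λ + α) < τ̄(λ) + τ̄(α)`, where `τ̄(λ) = √(gλ + σλ³)` and `λ₀` is its inflection point. -/
theorem no_resonance_conjugate_points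
    (g σ : ℝ) (hg : 0 < g) (hσ : 0 < σ)
    (τ : ℝ → ℝ) (hτ : τ = fun l : ℝ => Real.sqrt (g * l + σ * l ^ 3))
    (lam0 : ℝ) (hlam0 : lam0 = Real.sqrt ((2 * Real.sqrt 3 - 3) * g / (3 * σ))) :
    ∀ al l : ℝ, 0 < al → al ≤ lam0 → lam0 ≤ l →
      deriv τ al = deriv τ l →
      τ (l + al) < τ l + τ al := by
  intro al l hal hal0 hl0 hderiv
  subst hτ
  have hl : 0 < l := hal.trans_le (hal0.trans hl0)
  have hsq := sq_mul_eq_of_deriv_sqrt_cubic_eq hg hσ hal hl hderiv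
  have hineq : 9 * σ ^ 2 * l * al * (l + al) ^ 2 < 4 * (g + σ * l ^ 2) * (g + σ * al ^ 2) := by
    rcases eq_or_ne l al with rfl | hne
    · have hl_eq : l = lam0 := le_antisymm hal0 hl0
      refine resonance_ineq_diag hσ hl ?_
      simpa [hl_eq, hlam0] using two_mul_sigma_mul_inflection_sq_lt hg hσ
    · exact resonance_ineq_of_conjugatePointPoly_eq_zero hg hσ hal hl
        (conjugatePointPoly_eq_zero hne hsq)
  exact sqrt_cubic_add_lt hg.le hσ.le hal hl hineq
end
end
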